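/- For every n ∈ ℕ and every N > 0 there exists a measurable, nonnegative, integrable function q : ℝ → ℝ such that ∑_{k=0}^{n} [ R[x² + q, ψ_{2k+1}] − (2k+1) − (1/(π√(2k+1))) ∫_ℝ q(x) dx ] ≤ −N, where ψ_{2k+1}(x) = e^{−x²/2} H_{2k+1}(x) are the odd Hermite functions. (Since by the min-max principle the eigenvalues λ_0 ≤ … ≤ λ_n of −u'' + (x²+q)u = λu satisfy ∑_{k=0}^{n} λ_k ≤ ∑_{k=0}^{n} R[x²+q, ψ_{2k+1}], this shows no lower bound of the form of Theorem 1 can hold.) -/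

import Mathlib

open Real MeasureTheory Finset

open scoped ENNReal

/-- The physicists' Hermite polynomials. -/
noncomputable def H : ℕ → ℝ → ℝ
  | 0, _ => 1
  | 1, x => 2 * x
  | (n + 2), x => 2 * x * H (n + 1) x - 2 * ((n : ℝ) + 1) * H n x

/-- The Hermite functions, eigenfunctions of the quantum harmonic oscillator. -/
noncomputable def psi (k : ℕ) (x : ℝ) : ℝ := Real.exp (-x ^ 2 / 2) * H k x

/-- The Rayleigh quotient of the potential `W` at the test function `φ`. -/
noncomputable def rayleigh (W φ : ℝ → ℝ) : ℝ :=
  ((∫ x : ℝ, (deriv φ x) ^ 2) + ∫ x : ℝ, W x * (φ x) ^ 2) / ∫ x : ℝ, (φ x) ^ 2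

lemma H_cont : ∀ m : ℕ, Continuous (H m) ∧ Continuous (H (m+1)) := by
  intro m
  induction m with
  | zero =>
    constructor
    · simp only [H]; exact continuous_const
    · simp only [H]; exact continuous_const.mul continuous_id
  | succ k ih =>
    refine ⟨ih.2, ?_⟩
    have : H (k + 2) = fun x => 2 * x * H (k + 1) x - 2 * ((k : ℝ) + 1) * H k x := by
      funext x; simp [H]
    rw [this]
    exact ((continuous_const.mul continuous_id).mul ih.2).sub (continuous_const.mul ih.1)


lemma H_odd_zero : ∀ k : ℕ, H (2 * k + 1) 0 = 0 := by
  intro k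
  induction k with
  | zero => simp [H]
  | succ m ih =>
    have : 2 * (m + 1) + 1 = (2 * m + 1) + 2 := by ring
    rw [this]
    simp [H, ih]

lemma H_growth : ∀ m : ℕ, ∃ C : ℝ, 0 ≤ C ∧
    (∀ x, |H m x| ≤ C * (1 + x ^ 2) ^ m) ∧ (∀ x, |H (m+1) x| ≤ C * (1 + x ^ 2) ^ (m+1)) := by
  intro m
  induction m with
  | zero =>
    refine ⟨2, by norm_num, fun x => ?_, fun x => ?_⟩
    · simp only [H, pow_zero, mul_one]
      rw [abs_one]; norm_num
    · simp only [H, zero_add, pow_one, abs_mul, abs_two]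
      have h1 : |x| ≤ 1 + x ^ 2 := by nlinarith [sq_nonneg (|x| - 1), sq_abs x]
      linarith
  | succ k ih =>
    obtain ⟨C, hC0, h1, h2⟩ := ih
    have hC' : C ≤ 2 * C + 2 * ((k:ℝ) + 1) * C := by nlinarith [Nat.cast_nonneg (α := ℝ) k]
    refine ⟨2 * C + 2 * ((k:ℝ) + 1) * C, by positivity, fun x => ?_, fun x => ?_⟩
    · exact (h2 x).trans (mul_le_mul_of_nonneg_right hC' (by positivity))
    have hx1 : (0:ℝ) ≤ 1 + x ^ 2 := by positivity
    have hxm : |x| ≤ 1 + x ^ 2 := by nlinarith [sq_nonneg (|x| - 1), sq_abs x]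
    have hmono : (1 + x ^ 2) ^ k ≤ (1 + x ^ 2) ^ (k + 2) :=
      pow_le_pow_right₀ (by nlinarith [sq_nonneg x]) (by omega)
    have heq : H (k + 1 + 1) x = 2 * x * H (k + 1) x - 2 * ((k : ℝ) + 1) * H k x := by
      simp [H]
    rw [heq]
    have e1 : |2 * x * H (k + 1) x| ≤ 2 * C * (1 + x ^ 2) ^ (k + 2) := by
      rw [abs_mul, abs_mul, abs_two]
      calc 2 * |x| * |H (k+1) x| ≤ 2 * (1 + x ^ 2) * (C * (1 + x ^ 2) ^ (k+1)) := by
            apply mul_le_mul (by linarith) (h2 x) (abs_nonneg _) (by positivity)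
        _ = 2 * C * (1 + x ^ 2) ^ (k + 2) := by ring
    have e2 : |2 * ((k : ℝ) + 1) * H k x| ≤ 2 * ((k:ℝ) + 1) * C * (1 + x ^ 2) ^ (k + 2) := by
      rw [abs_mul]
      have habs : |2 * ((k:ℝ) + 1)| = 2 * ((k:ℝ)+1) := by
        rw [abs_of_nonneg]; positivity
      rw [habs]
      have hb : |H k x| ≤ C * (1 + x ^ 2) ^ (k + 2) := by
        refine (h1 x).trans ?_
        exact mul_le_mul_of_nonneg_left hmono hC0
      calc 2 * ((k:ℝ)+1) * |H k x| ≤ 2 * ((k:ℝ)+1) * (C * (1 + x ^ 2) ^ (k+2)) :=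
            mul_le_mul_of_nonneg_left hb (by positivity)
        _ = 2 * ((k:ℝ)+1) * C * (1 + x ^ 2) ^ (k+2) := by ring
    calc |2 * x * H (k + 1) x - 2 * ((k : ℝ) + 1) * H k x|
        ≤ |2 * x * H (k + 1) x| + |2 * ((k : ℝ) + 1) * H k x| := abs_sub _ _
      _ ≤ 2 * C * (1 + x ^ 2) ^ (k + 2) + 2 * ((k:ℝ) + 1) * C * (1 + x ^ 2) ^ (k + 2) := by
          linarith
      _ = (2 * C + 2 * ((k:ℝ) + 1) * C) * (1 + x ^ 2) ^ (k + 1 + 1) := by ring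


lemma H_ge_one : ∀ m : ℕ, ∀ x : ℝ, (m : ℝ) + 1 ≤ x → 1 ≤ H m x ∧ H m x ≤ H (m+1) x := by
  intro m
  induction m with
  | zero =>
    intro x hx
    simp only [Nat.cast_zero, zero_add] at hx
    constructor
    · simp [H]
    · simp [H]; linarith
  | succ k ih =>
    intro x hx
    push_cast at hx
    have hx' : (k : ℝ) + 1 ≤ x := by linarith
    obtain ⟨ih1, ih2⟩ := ih x hx'
    have h1 : 1 ≤ H (k+1) x := le_trans ih1 ih2
    have heq : H (k + 1 + 1) x = 2 * x * H (k + 1) x - 2 * ((k : ℝ) + 1) * H k x := by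
      simp [H]
    have key : H (k+1) x ≤ H (k+1+1) x := by
      rw [heq]
      have : 2 * ((k:ℝ) + 1) * H k x ≤ 2 * ((k:ℝ)+1) * H (k+1) x :=
        mul_le_mul_of_nonneg_left ih2 (by positivity)
      nlinarith
    exact ⟨h1, key⟩

lemma psi_cont (m : ℕ) : Continuous (psi m) := by
  unfold psi
  exact (Real.continuous_exp.comp (by continuity)).mul (H_cont m).1


lemma psi_sq_bound (m : ℕ) : ∃ K : ℝ, 0 ≤ K ∧
    ∀ x : ℝ, (1 + x ^ 2) * (psi m x) ^ 2 ≤ K * Real.exp (-(1/2) * x ^ 2) := by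
  obtain ⟨C, hC0, hC, -⟩ := H_growth m
  set j := 2 * m + 1 with hj
  refine ⟨C ^ 2 * 2 ^ j * (j.factorial : ℝ) * Real.exp (1/2), by positivity, fun x => ?_⟩
  have hx1 : (0:ℝ) < 1 + x ^ 2 := by positivity
  have hpsi : (psi m x) ^ 2 = Real.exp (-x ^ 2) * (H m x) ^ 2 := by
    unfold psi
    rw [mul_pow, ← Real.exp_nat_mul]
    congr 1
    push_cast; ring
  have hH : (H m x) ^ 2 ≤ C ^ 2 * (1 + x ^ 2) ^ (2 * m) := by
    have := hC x
    calc (H m x) ^ 2 = |H m x| ^ 2 := (sq_abs _).symm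
      _ ≤ (C * (1 + x ^ 2) ^ m) ^ 2 := by
          apply pow_le_pow_left₀ (abs_nonneg _) this
      _ = C ^ 2 * (1 + x ^ 2) ^ (2 * m) := by rw [mul_pow, ← pow_mul]; ring_nf
  have hpow : (1 + x ^ 2) ^ j ≤ 2 ^ j * (j.factorial : ℝ) * Real.exp ((1 + x ^ 2) / 2) := by
    have h0 : (0:ℝ) ≤ (1 + x ^ 2) / 2 := by positivity
    have := Real.pow_div_factorial_le_exp ((1 + x ^ 2)/2) h0 j
    have h2 : ((1 + x ^ 2)/2) ^ j ≤ (j.factorial : ℝ) * Real.exp ((1 + x ^ 2)/2) := by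
      rw [div_le_iff₀ (by positivity : (0:ℝ) < (j.factorial : ℝ))] at this
      linarith [this]
    calc (1 + x ^ 2) ^ j = 2 ^ j * ((1 + x ^ 2)/2) ^ j := by
          rw [← mul_pow]; ring_nf
      _ ≤ 2 ^ j * ((j.factorial : ℝ) * Real.exp ((1 + x ^ 2)/2)) := by
          apply mul_le_mul_of_nonneg_left h2 (by positivity)
      _ = 2 ^ j * (j.factorial : ℝ) * Real.exp ((1 + x ^ 2)/2) := by ring
  have hexp : Real.exp ((1 + x ^ 2) / 2) * Real.exp (-x ^ 2) =
      Real.exp (1/2) * Real.exp (-(1/2) * x ^ 2) := by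
    rw [← Real.exp_add, ← Real.exp_add]; ring_nf
  calc (1 + x ^ 2) * (psi m x) ^ 2 = (1 + x ^ 2) * (Real.exp (-x^2) * (H m x)^2) := by
        rw [hpsi]
    _ ≤ (1 + x ^ 2) * (Real.exp (-x^2) * (C ^ 2 * (1 + x ^ 2) ^ (2*m))) := by
        apply mul_le_mul_of_nonneg_left _ hx1.le
        exact mul_le_mul_of_nonneg_left hH (Real.exp_pos _).le
    _ = C ^ 2 * ((1 + x ^ 2) ^ j * Real.exp (-x^2)) := by
        rw [hj]; ring
    _ ≤ C ^ 2 * ((2 ^ j * (j.factorial : ℝ) * Real.exp ((1 + x ^ 2)/2)) * Real.exp (-x^2)) := by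
        apply mul_le_mul_of_nonneg_left _ (by positivity)
        exact mul_le_mul_of_nonneg_right hpow (Real.exp_pos _).le
    _ = C ^ 2 * 2 ^ j * (j.factorial : ℝ) * Real.exp (1/2) * Real.exp (-(1/2) * x ^ 2) := by
        rw [mul_assoc (2 ^ j * (j.factorial:ℝ)) _ _, hexp]; ring


lemma integrable_psi_sq (m : ℕ) : Integrable (fun x : ℝ => (psi m x) ^ 2) := by
  obtain ⟨K, hK0, hK⟩ := psi_sq_bound m
  apply Integrable.mono'
    ((integrable_exp_neg_mul_sq (by norm_num : (0:ℝ) < 1/2)).const_mul K)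
  · exact ((psi_cont m).pow 2).aestronglyMeasurable
  · filter_upwards with x
    rw [Real.norm_eq_abs, abs_of_nonneg (sq_nonneg _)]
    have := hK x
    nlinarith [sq_nonneg (psi m x), sq_nonneg x]

lemma integrable_x_sq_psi_sq (m : ℕ) : Integrable (fun x : ℝ => x ^ 2 * (psi m x) ^ 2) := by
  obtain ⟨K, hK0, hK⟩ := psi_sq_bound m
  apply Integrable.mono'
    ((integrable_exp_neg_mul_sq (by norm_num : (0:ℝ) < 1/2)).const_mul K)
  · exact ((continuous_pow 2).mul ((psi_cont m).pow 2)).aestronglyMeasurable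
  · filter_upwards with x
    rw [Real.norm_eq_abs, abs_of_nonneg (by positivity)]
    have := hK x
    nlinarith [sq_nonneg (psi m x), sq_nonneg x]

lemma integral_psi_sq_pos (m : ℕ) : 0 < ∫ x : ℝ, (psi m x) ^ 2 := by
  rw [integral_pos_iff_support_of_nonneg (fun x => sq_nonneg _) (integrable_psi_sq m)]
  have hsub : Set.Ici ((m:ℝ) + 1) ⊆ Function.support (fun x => (psi m x) ^ 2) := by
    intro x hx
    have h1 := (H_ge_one m x hx).1
    have : psi m x ≠ 0 := by
      unfold psi
      apply mul_ne_zero (Real.exp_ne_zero _)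
      linarith
    simp only [Function.mem_support]
    exact pow_ne_zero 2 this
  calc (0:ℝ≥0∞) < volume (Set.Ici ((m:ℝ)+1)) := by simp [Real.volume_Ici]
    _ ≤ volume (Function.support (fun x => (psi m x) ^ 2)) := measure_mono hsub

theorem no_lower_bound (n : ℕ) (N : ℝ) (hN : 0 < N) :
    ∃ q : ℝ → ℝ, Measurable q ∧ (∀ x, 0 ≤ q x) ∧ Integrable q ∧
      ∑ k ∈ Finset.range (n + 1),
          (rayleigh (fun x => x ^ 2 + q x) (psi (2 * k + 1)) - (2 * (k : ℝ) + 1)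
            - (1 / (π * Real.sqrt (2 * (k : ℝ) + 1))) * ∫ x : ℝ, q x)
        ≤ -N := by
  classical
  -- abbreviations
  set M : ℕ → ℕ := fun k => 2 * k + 1 with hM
  set D : ℕ → ℝ := fun k => ∫ x : ℝ, (psi (M k) x) ^ 2 with hD
  have hDpos : ∀ k, 0 < D k := fun k => integral_psi_sq_pos (M k)
  set P : ℕ → ℝ := fun k => π * Real.sqrt (2 * (k : ℝ) + 1) with hP
  have hPpos : ∀ k, 0 < P k := by
    intro k
    exact mul_pos Real.pi_pos (Real.sqrt_pos.2 (by positivity))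
  set A : ℕ → ℝ := fun k => ∫ x : ℝ, (deriv (psi (M k)) x) ^ 2 with hA
  set B : ℕ → ℝ := fun k => ∫ x : ℝ, x ^ 2 * (psi (M k) x) ^ 2 with hB
  set G : ℕ → ℝ := fun k => (A k + B k) / D k - (2 * (k : ℝ) + 1) with hG
  set S : ℝ := ∑ k ∈ Finset.range (n + 1), 1 / (2 * P k) with hS
  have hSpos : 0 < S := by
    apply Finset.sum_pos
    · intro k _
      have := hPpos k
      positivity
    · exact ⟨0, Finset.mem_range.2 (Nat.succ_pos n)⟩
  set c : ℝ := max 1 ((N + ∑ k ∈ Finset.range (n + 1), G k) / S) with hc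
  have hc1 : (1:ℝ) ≤ c := le_max_left _ _
  have hcpos : 0 < c := lt_of_lt_of_le one_pos hc1
  have hcS : N + ∑ k ∈ Finset.range (n + 1), G k ≤ c * S := by
    have h2 : (N + ∑ k ∈ Finset.range (n + 1), G k) / S ≤ c := le_max_right _ _
    calc N + ∑ k ∈ Finset.range (n + 1), G k
        = (N + ∑ k ∈ Finset.range (n + 1), G k) / S * S := by field_simp
      _ ≤ c * S := mul_le_mul_of_nonneg_right h2 hSpos.le
  set δ : ℕ → ℝ := fun k => D k / (2 * ((n:ℝ) + 1) * P k) with hδ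
  have hδpos : ∀ k, 0 < δ k := by
    intro k
    exact div_pos (hDpos k) (mul_pos (by positivity) (hPpos k))
  -- choose the small scale for each k
  have hek : ∀ k : ℕ, ∃ e : ℝ, 0 < e ∧ ∀ x : ℝ, |x| ≤ e → (psi (M k) x) ^ 2 ≤ δ k := by
    intro k
    have hcont : ContinuousAt (fun x => (psi (M k) x) ^ 2) 0 :=
      ((psi_cont (M k)).pow 2).continuousAt
    have h0 : psi (M k) 0 = 0 := by
      simp [psi, hM, H_odd_zero k]
    rw [Metric.continuousAt_iff] at hcont
    obtain ⟨e, he, hcl⟩ := hcont (δ k) (hδpos k)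
    refine ⟨e / 2, by linarith, fun x hx => ?_⟩
    have hd : dist x 0 < e := by
      rw [Real.dist_eq, sub_zero]
      exact lt_of_le_of_lt hx (by linarith)
    have h2 := hcl hd
    simp only [Real.dist_eq, h0] at h2
    norm_num at h2
    exact h2.le
  choose e hepos hesmall using hek
  -- uniform scale
  have hne : (Finset.range (n + 1)).Nonempty := ⟨0, Finset.mem_range.2 (Nat.succ_pos n)⟩
  set ε : ℝ := (Finset.range (n + 1)).inf' hne e with hε
  have hεpos : 0 < ε := by
    rw [hε, Finset.lt_inf'_iff]
    exact fun k _ => hepos k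
  have hεle : ∀ k ∈ Finset.range (n + 1), ε ≤ e k := fun k hk => Finset.inf'_le e hk
  -- the potential
  set q : ℝ → ℝ := Set.indicator (Set.Icc (-ε) ε) (fun _ => c / (2 * ε)) with hq
  have hqmeas : Measurable q := measurable_const.indicator measurableSet_Icc
  have hqnonneg : ∀ x, 0 ≤ q x := fun x =>
    Set.indicator_nonneg (fun _ _ => by positivity) x
  have hvol : volume (Set.Icc (-ε) ε) = ENNReal.ofReal (2 * ε) := by
    rw [Real.volume_Icc]
    congr 1
    ring
  have hvolR : (volume (Set.Icc (-ε) ε)).toReal = 2 * ε := by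
    rw [hvol, ENNReal.toReal_ofReal (by linarith)]
  have hqint : Integrable q := by
    rw [hq, integrable_indicator_iff measurableSet_Icc]
    exact integrableOn_const (by rw [hvol]; exact ENNReal.ofReal_ne_top)
  have hqintegral : (∫ x : ℝ, q x) = c := by
    rw [hq, integral_indicator measurableSet_Icc, setIntegral_const, smul_eq_mul, measureReal_def, hvolR]
    field_simp
  -- integrability of q * psi^2 and the key bound on its integral
  have hkey : ∀ k ∈ Finset.range (n + 1),
      Integrable (fun x : ℝ => q x * (psi (M k) x) ^ 2) ∧
      (0 ≤ ∫ x : ℝ, q x * (psi (M k) x) ^ 2) ∧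
      (∫ x : ℝ, q x * (psi (M k) x) ^ 2) ≤ δ k * c := by
    intro k hk
    have hrw : (fun x : ℝ => q x * (psi (M k) x) ^ 2) =
        Set.indicator (Set.Icc (-ε) ε) (fun x => c / (2 * ε) * (psi (M k) x) ^ 2) := by
      funext x
      by_cases hx : x ∈ Set.Icc (-ε) ε
      · rw [hq]; simp [Set.indicator_of_mem hx]
      · rw [hq]; simp [Set.indicator_of_notMem hx]
    have hio : IntegrableOn (fun x => c / (2 * ε) * (psi (M k) x) ^ 2) (Set.Icc (-ε) ε) :=
      (continuous_const.mul ((psi_cont (M k)).pow 2)).integrableOn_Icc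
    have hint : Integrable (fun x : ℝ => q x * (psi (M k) x) ^ 2) := by
      rw [hrw, integrable_indicator_iff measurableSet_Icc]
      exact hio
    refine ⟨hint, integral_nonneg fun x => mul_nonneg (hqnonneg x) (sq_nonneg _), ?_⟩
    rw [hrw, integral_indicator measurableSet_Icc]
    have hbound : ∀ x ∈ Set.Icc (-ε) ε,
        c / (2 * ε) * (psi (M k) x) ^ 2 ≤ c / (2 * ε) * δ k := by
      intro x hx
      apply mul_le_mul_of_nonneg_left _ (by positivity)
      apply hesmall k
      rw [abs_le]
      refine ⟨?_, ?_⟩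
      · linarith [hx.1, hεle k hk]
      · linarith [hx.2, hεle k hk]
    calc (∫ x in Set.Icc (-ε) ε, c / (2 * ε) * (psi (M k) x) ^ 2)
        ≤ ∫ _x in Set.Icc (-ε) ε, c / (2 * ε) * δ k :=
          setIntegral_mono_on hio (integrableOn_const (by rw [hvol]; exact ENNReal.ofReal_ne_top)) measurableSet_Icc hbound
      _ = (2 * ε) * (c / (2 * ε) * δ k) := by
          rw [setIntegral_const, smul_eq_mul, measureReal_def, hvolR]
      _ = δ k * c := by field_simp
  -- assemble
  refine ⟨q, hqmeas, hqnonneg, hqint, ?_⟩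
  have hterm : ∀ k ∈ Finset.range (n + 1),
      rayleigh (fun x => x ^ 2 + q x) (psi (2 * k + 1)) - (2 * (k : ℝ) + 1)
        - (1 / (π * Real.sqrt (2 * (k : ℝ) + 1))) * ∫ x : ℝ, q x
      ≤ G k - c * (1 / (2 * P k)) := by
    intro k hk
    obtain ⟨hint, hI0, hIle⟩ := hkey k hk
    set I : ℝ := ∫ x : ℝ, q x * (psi (M k) x) ^ 2 with hI
    have hsplit : (∫ x : ℝ, (x ^ 2 + q x) * (psi (M k) x) ^ 2) = B k + I := by
      have : (fun x : ℝ => (x ^ 2 + q x) * (psi (M k) x) ^ 2)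
          = fun x : ℝ => x ^ 2 * (psi (M k) x) ^ 2 + q x * (psi (M k) x) ^ 2 := by
        funext x; ring
      rw [this, integral_add (integrable_x_sq_psi_sq (M k)) hint]
    have hray : rayleigh (fun x => x ^ 2 + q x) (psi (M k)) = (A k + (B k + I)) / D k := by
      rw [rayleigh, hsplit]
    have hMk : (2 * k + 1 : ℕ) = M k := rfl
    rw [hMk, hray, hqintegral]
    -- now pure arithmetic
    have hDk := hDpos k
    have hPk := hPpos k
    have hD' : D k ≠ 0 := hDk.ne'
    have hP' : P k ≠ 0 := hPk.ne'
    have hn1 : ((n:ℝ) + 1) ≠ 0 := by positivity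
    have heq1 : (A k + (B k + I)) / D k = (A k + B k) / D k + I / D k := by
      rw [← add_div]; ring_nf
    have h1 : I / D k ≤ δ k * c / D k := div_le_div_of_nonneg_right hIle hDk.le
    have h2 : δ k * c / D k = c / (2 * ((n:ℝ) + 1) * P k) := by
      rw [hδ]
      field_simp
    have h3 : c / (2 * ((n:ℝ) + 1) * P k) ≤ c / (2 * P k) := by
      apply div_le_div_of_nonneg_left hcpos.le (by positivity)
      have : (1:ℝ) ≤ (n:ℝ) + 1 := by
        have := Nat.cast_nonneg (α := ℝ) n
        linarith
      nlinarith [hPk]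
    have h4 : 1 / P k * c = 2 * (c / (2 * P k)) := by
      field_simp
    have h5 : c * (1 / (2 * P k)) = c / (2 * P k) := by
      rw [mul_one_div]
    rw [hG]
    have hPeq : π * Real.sqrt (2 * (k : ℝ) + 1) = P k := rfl
    rw [hPeq]
    linarith
  calc ∑ k ∈ Finset.range (n + 1),
          (rayleigh (fun x => x ^ 2 + q x) (psi (2 * k + 1)) - (2 * (k : ℝ) + 1)
            - (1 / (π * Real.sqrt (2 * (k : ℝ) + 1))) * ∫ x : ℝ, q x)
      ≤ ∑ k ∈ Finset.range (n + 1), (G k - c * (1 / (2 * P k))) := Finset.sum_le_sum hterm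
    _ = (∑ k ∈ Finset.range (n + 1), G k) - c * S := by
        rw [Finset.sum_sub_distrib, ← Finset.mul_sum]
    _ ≤ -N := by linarith
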